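/- For every natural number n, Σ_{k=0}^{a(n)} a(k) = a(n)² + 2·a(n) − n, where a enumerates the odious numbers in increasing order. -/

import Mathlib

/-- Sum of base-`d` digits of `n`. -/
def sdig (d n : ℕ) : ℕ := (Nat.digits d n).sum

/-- `t_d(n)`: base-`d` digit sum of `n`, reduced mod `d`. -/
def td (d n : ℕ) : ℕ := sdig d n % d

/-- `a_{j,d}(n)`: n-th natural (0-indexed, increasing) with base-`d` digit sum ≡ j mod d. -/
noncomputable def agen (d j n : ℕ) : ℕ := Nat.nth (fun k => sdig d k % d = j) n

/-- n-th odious number (binary digit sum odd), 0-indexed increasing. -/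
noncomputable def odious (n : ℕ) : ℕ := Nat.nth (fun k => (Nat.digits 2 k).sum % 2 = 1) n

/-- n-th evil number (binary digit sum even), 0-indexed increasing. -/
noncomputable def evil (n : ℕ) : ℕ := Nat.nth (fun k => (Nat.digits 2 k).sum % 2 = 0) n

/-- Thue–Morse sequence: parity of the binary digit sum. -/
def tm (n : ℕ) : ℕ := (Nat.digits 2 n).sum % 2


/-!
Among `2k` and `2k + 1` exactly one number is odious, since appending a binary digit `1`
flips the parity of the digit sum. Hence `a(k) = 2k + 1 - t(k)`, where `t` is the Thue–Morse
sequence, and `∑_{k ≤ m} t(k)` counts the odious numbers up to `m`, which is `n + 1` for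
`m = a(n)`. So the sum is `∑_{k ≤ m} (2k + 1) - (n + 1) = (m + 1)² - (n + 1)`.
-/

namespace Nat

variable {p : ℕ → Prop} [DecidablePred p]

theorem count_two_mul_of_alternating (hp : ∀ k, p (2 * k + 1) ↔ ¬ p (2 * k)) (k : ℕ) :
    count p (2 * k) = k := by
  induction k with
  | zero => simp
  | succ k ih =>
    rw [show 2 * (k + 1) = 2 * k + 1 + 1 by ring, count_succ, count_succ, ih]
    by_cases h : p (2 * k) <;> simp [h, hp]

theorem nth_of_alternating (hp : ∀ k, p (2 * k + 1) ↔ ¬ p (2 * k)) (k : ℕ) :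
    nth p k = if p (2 * k) then 2 * k else 2 * k + 1 := by
  set w := if p (2 * k) then 2 * k else 2 * k + 1
  have hw : p w ∧ count p w = k := by
    by_cases h : p (2 * k)
    · simp [w, h, count_two_mul_of_alternating hp]
    · simp [w, h, hp, count_succ, count_two_mul_of_alternating hp]
  calc nth p k = nth p (count p w) := by rw [hw.2]
    _ = w := nth_count hw.1

theorem count_nth_add_one_of_alternating (hp : ∀ k, p (2 * k + 1) ↔ ¬ p (2 * k)) (k : ℕ) :
    count p (nth p k + 1) = k + 1 := by
  by_cases h : p (2 * k) <;>
    simp [nth_of_alternating hp, h, hp, count_succ, count_two_mul_of_alternating hp]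

end Nat

theorem tm_lt_two (n : ℕ) : tm n < 2 := Nat.mod_lt _ two_pos

theorem tm_two_mul (n : ℕ) : tm (2 * n) = tm n := by
  rcases Nat.eq_zero_or_pos n with rfl | hn
  · rfl
  · simp [tm, Nat.digits_def' one_lt_two (by omega : 0 < 2 * n)]

theorem tm_two_mul_add_one (n : ℕ) : tm (2 * n + 1) = 1 - tm n := by
  have := tm_lt_two n
  simp only [tm] at this ⊢
  rw [Nat.digits_def' one_lt_two (by omega), List.sum_cons,
    show (2 * n + 1) % 2 = 1 by omega, show (2 * n + 1) / 2 = n by omega]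
  omega

theorem tm_two_mul_add_one_eq_one_iff (n : ℕ) : tm (2 * n + 1) = 1 ↔ ¬ tm (2 * n) = 1 := by
  have := tm_lt_two n
  rw [tm_two_mul_add_one, tm_two_mul]
  omega

theorem odious_eq (n : ℕ) : odious n = 2 * n + 1 - tm n := by
  have := tm_lt_two n
  change Nat.nth (tm · = 1) n = _
  rw [Nat.nth_of_alternating tm_two_mul_add_one_eq_one_iff]
  split_ifs with h <;> rw [tm_two_mul] at h <;> omega

theorem count_odious_add_one (n : ℕ) : Nat.count (tm · = 1) (odious n + 1) = n + 1 :=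
  Nat.count_nth_add_one_of_alternating tm_two_mul_add_one_eq_one_iff n

theorem sum_range_tm (N : ℕ) : ∑ k ∈ Finset.range N, tm k = Nat.count (tm · = 1) N := by
  rw [Nat.count_eq_card_filter_range, Finset.card_filter]
  refine Finset.sum_congr rfl fun k _ => ?_
  have := tm_lt_two k
  split_ifs <;> omega

theorem sum_range_two_mul_add_one (N : ℕ) : ∑ k ∈ Finset.range N, (2 * k + 1 : ℤ) = N ^ 2 := by
  induction N with
  | zero => simp
  | succ N ih => rw [Finset.sum_range_succ, ih]; push_cast; ring

theorem stmt13 (n : ℕ) :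
    (∑ k ∈ Finset.range (odious n + 1), odious k : ℤ) =
      (odious n : ℤ) ^ 2 + 2 * odious n - n := by
  have h_odious (k : ℕ) : (odious k : ℤ) = 2 * k + 1 - tm k := by
    have := tm_lt_two k
    rw [odious_eq]
    omega
  calc (∑ k ∈ Finset.range (odious n + 1), odious k : ℤ)
      = ∑ k ∈ Finset.range (odious n + 1), ((2 * k + 1 : ℤ) - tm k) :=
        Finset.sum_congr rfl fun k _ => h_odious k
    _ = ((odious n + 1 : ℕ) : ℤ) ^ 2 - (n + 1 : ℕ) := by
        rw [Finset.sum_sub_distrib, sum_range_two_mul_add_one, ← Nat.cast_sum, sum_range_tm,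
          count_odious_add_one]
    _ = (odious n : ℤ) ^ 2 + 2 * odious n - n := by push_cast; ring
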